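/- arXiv:1506.02727 — 2 statements merged into one kernel-verified Lean document; each statement's English description precedes it below -/
import Mathlib

section
/- Let (H,d) be a δ-hyperbolic metric space with 5εδ ≤ 1, fix a basepoint x ∈ H, and define ρ_ε on the Gromov completion H̄ by ρ_ε(ξ,η) = inf Σ_{i=1}^{n-1} exp(−ε(ξ_i|ξ_{i+1})_x) over chains ξ = ξ_1, …, ξ_n = η in H̄ (and ρ_ε(ξ,ξ) = 0). Then ρ_ε is a metric on H̄. -/
open Filter Topology

noncomputable section

/-- The Gromov product `(x|y)_z`. -/
def gromovProd {H : Type*} [MetricSpace H] (x y z : H) : ℝ :=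
  (dist x z + dist y z - dist x y) / 2

/-- A Gromov sequence (a sequence converging to infinity). -/
def IsGromovSeq {H : Type*} [MetricSpace H] (s : ℕ → H) : Prop :=
  ∀ (w : H) (M : ℝ), ∃ N, ∀ i ≥ N, ∀ j ≥ N, M ≤ gromovProd (s i) (s j) w

/-- Equivalence of Gromov sequences. -/
def GromovSeqEquiv {H : Type*} [MetricSpace H] (s t : ℕ → H) : Prop :=
  ∀ (w : H) (M : ℝ), ∃ N, ∀ i ≥ N, ∀ j ≥ N, M ≤ gromovProd (s i) (t j) w

/-- An abstract model of the Gromov completion `H̄ = H ∪ ∂H` of a hyperbolic space `H`: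
a Hausdorff topological space into which `H` embeds densely so that the points outside
`H` (the boundary) are exactly the limits of Gromov sequences, two Gromov sequences
having the same limit iff they are equivalent. -/
structure GromovCompletion (H : Type*) [MetricSpace H] where
  Hb : Type*
  [top : TopologicalSpace Hb]
  [t2 : T2Space Hb]
  ι : H → Hb
  inj : Function.Injective ι
  cont : Continuous ι
  dense : DenseRange ι
  gromovSeq_tendsto : ∀ s : ℕ → H, IsGromovSeq s →
    ∃ ξ, ξ ∉ Set.range ι ∧ Tendsto (fun n => ι (s n)) atTop (nhds ξ)
  tendsto_gromovSeq : ∀ (s : ℕ → H) (ξ : Hb), ξ ∉ Set.range ι →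
    Tendsto (fun n => ι (s n)) atTop (nhds ξ) → IsGromovSeq s
  exists_seq : ∀ ξ : Hb, ξ ∉ Set.range ι →
    ∃ s : ℕ → H, Tendsto (fun n => ι (s n)) atTop (nhds ξ)
  same_limit_iff : ∀ (s t : ℕ → H) (ξ ζ : Hb), ξ ∉ Set.range ι → ζ ∉ Set.range ι →
    Tendsto (fun n => ι (s n)) atTop (nhds ξ) → Tendsto (fun n => ι (t n)) atTop (nhds ζ) →
    (GromovSeqEquiv s t ↔ ξ = ζ)

attribute [instance] GromovCompletion.top GromovCompletion.t2

variable {H : Type*} [MetricSpace H]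

/-- The Gromov boundary `∂H` in a completion model. -/
def GromovCompletion.boundary (C : GromovCompletion H) : Set C.Hb :=
  (Set.range C.ι)ᶜ

/-- `γ` restricted to the interval `I` is a geodesic arc in the completion with
endpoints `ξ` and `η` (which may lie on the boundary). -/
def IsGeodArc (C : GromovCompletion H) (γ : ℝ → H) (I : Set ℝ) (ξ η : C.Hb) : Prop :=
  I.Nonempty ∧ I.OrdConnected ∧
  (∀ s ∈ I, ∀ t ∈ I, dist (γ s) (γ t) = |s - t|) ∧
  (BddBelow I → ∃ a, IsLeast I a ∧ C.ι (γ a) = ξ) ∧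
  (¬ BddBelow I → Tendsto (fun t => C.ι (γ t)) atBot (nhds ξ)) ∧
  (BddAbove I → ∃ b, IsGreatest I b ∧ C.ι (γ b) = η) ∧
  (¬ BddAbove I → Tendsto (fun t => C.ι (γ t)) atTop (nhds η))

/-- `H` is a geodesic space: any two points are joined by a geodesic arc. -/
def GeodSpace (C : GromovCompletion H) : Prop :=
  ∀ x y : H, ∃ (γ : ℝ → H) (I : Set ℝ), IsGeodArc C γ I (C.ι x) (C.ι y)

/-- `Y ⊆ H̄` is `c`-quasi-convex: every geodesic arc between points of `Y` stays within
distance `c` of `Y`. -/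
def QuasiConvexWith (C : GromovCompletion H) (c : ℝ) (Y : Set C.Hb) : Prop :=
  ∀ (γ : ℝ → H) (I : Set ℝ) (ξ η : C.Hb), ξ ∈ Y → η ∈ Y → IsGeodArc C γ I ξ η →
    ∀ t ∈ I, ∃ z : H, C.ι z ∈ Y ∧ dist (γ t) z ≤ c

/-- The closed convex hull of `K ⊆ H̄`: the closure of the union of `K` and of all
geodesic arcs with both endpoints in `K`. -/
def GromovHull (C : GromovCompletion H) (K : Set C.Hb) : Set C.Hb :=
  closure (K ∪ {p | ∃ (γ : ℝ → H) (I : Set ℝ) (ξ η : C.Hb), ξ ∈ K ∧ η ∈ K ∧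
    IsGeodArc C γ I ξ η ∧ ∃ t ∈ I, p = C.ι (γ t)})

end

noncomputable section

open scoped Classical

variable {H : Type*} [MetricSpace H]

/-- The Gromov product of two points of the completion with respect to a basepoint
`z ∈ H`, defined as the infimum over sequences converging to the two points of the
liminf of the Gromov products. -/
def gromovProdExt (C : GromovCompletion H) (z : H) (ξ η : C.Hb) : ℝ :=
  sInf {r | ∃ s t : ℕ → H,
    Tendsto (fun n => C.ι (s n)) atTop (nhds ξ) ∧
    Tendsto (fun n => C.ι (t n)) atTop (nhds η) ∧
    r = Filter.liminf (fun p : ℕ × ℕ => gromovProd (s p.1) (t p.2) z) (atTop ×ˢ atTop)}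

/-- The visual quasi-metric `ρ_ε` on the Gromov completion: the chain infimum of
`exp(−ε (ξ_i | ξ_{i+1})_x)`. -/
def rhoVisual (C : GromovCompletion H) (ε : ℝ) (x : H) (ξ η : C.Hb) : ℝ :=
  if ξ = η then 0
  else sInf {r | ∃ (n : ℕ) (c : Fin (n + 2) → C.Hb), c 0 = ξ ∧ c (Fin.last (n + 1)) = η ∧
    r = ∑ i : Fin (n + 1),
      Real.exp (-(ε * gromovProdExt C x (c i.castSucc) (c i.succ)))}

end


/-!
The visual gauge `g ξ η = exp (-ε (ξ|η)_x)` is a `K`-quasi-ultrametric,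
`g ξ ζ ≤ K * max (g ξ η) (g η ζ)` with `K = exp (ε δ)`, by the four-point inequality on `H̄`,
and `5 ε δ ≤ 1` gives `K ^ 2 ≤ 2`. Since a chain never gains from repeating a point, `ρ_ε` is the
largest pseudometric below `g` off the diagonal (`PseudoMetricSpace.ofPreNNDist`). Splitting a
chain at the step where half of its length is reached shows `g ≤ 2 ρ_ε` whenever `K ^ 2 ≤ 2`
(`PseudoMetricSpace.le_two_mul_dist_ofPreNNDist`), so `ρ_ε` separates points.
-/

open NNReal

section Chains

variable {X : Type*}

/-- `chainSum d x [x₁, …, xₙ] y = d x x₁ + d x₁ x₂ + ⋯ + d xₙ y`, written as in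
`PseudoMetricSpace.ofPreNNDist`. -/
def chainSum {M : Type*} [AddCommMonoid M] (d : X → X → M) (x : X) (l : List X) (y : X) : M :=
  ((x :: l).zipWith d (l ++ [y])).sum

section AddCommMonoid

variable {M : Type*} [AddCommMonoid M] (d : X → X → M)

@[simp]
theorem chainSum_nil (x y : X) : chainSum d x [] y = d x y := by
  simp [chainSum]

@[simp]
theorem chainSum_cons (x a : X) (l : List X) (y : X) :
    chainSum d x (a :: l) y = d x a + chainSum d a l y := by
  simp [chainSum]

theorem sum_fin_chain_eq_chainSum {n : ℕ} (c : Fin (n + 2) → X) :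
    ∑ i : Fin (n + 1), d (c i.castSucc) (c i.succ) =
      chainSum d (c 0) (List.ofFn fun i : Fin n => c i.succ.castSucc) (c (Fin.last (n + 1))) := by
  induction n with
  | zero => simp
  | succ n ih =>
    have htail := ih (Fin.tail c)
    simp only [Fin.tail, Fin.succ_castSucc] at htail
    rw [Fin.sum_univ_succ, htail, List.ofFn_succ, chainSum_cons]
    simp

theorem setOf_fin_chain_sum_eq_range (a b : X) :
    {r | ∃ (n : ℕ) (c : Fin (n + 2) → X), c 0 = a ∧ c (Fin.last (n + 1)) = b ∧
      r = ∑ i : Fin (n + 1), d (c i.castSucc) (c i.succ)} = Set.range fun l => chainSum d a l b := by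
  ext r
  constructor
  · rintro ⟨n, c, rfl, rfl, rfl⟩
    exact ⟨_, (sum_fin_chain_eq_chainSum d c).symm⟩
  · rintro ⟨l, rfl⟩
    refine ⟨l.length, Fin.cons a (Fin.snoc l.get b), rfl, by simp [← Fin.succ_last], ?_⟩
    rw [sum_fin_chain_eq_chainSum]
    simp

end AddCommMonoid

theorem chainSum_mono {d e : X → X → ℝ≥0} (hde : d ≤ e) (x : X) (l : List X) (y : X) :
    chainSum d x l y ≤ chainSum e x l y := by
  induction l generalizing x with
  | nil => simpa using hde x y
  | cons a l ih => simpa using add_le_add (hde x a) (ih a)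

theorem coe_chainSum (d : X → X → ℝ≥0) (x : X) (l : List X) (y : X) :
    ((chainSum d x l y : ℝ≥0) : ℝ) = chainSum (fun a b => (d a b : ℝ)) x l y := by
  induction l generalizing x with
  | nil => simp
  | cons a l ih => simp [ih]

theorem le_sq_mul_max_of_le_mul_max {d : X → X → ℝ≥0} {K : ℝ} (hK : 1 ≤ K)
    (hdK : ∀ a b c, (d a c : ℝ) ≤ K * max (d a b : ℝ) (d b c)) (a b c e : X) :
    (d a e : ℝ) ≤ K ^ 2 * max (d a b : ℝ) (max (d b c : ℝ) (d c e)) := by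
  have hK0 : 0 ≤ K := zero_le_one.trans hK
  calc (d a e : ℝ) ≤ K * max (d a b : ℝ) (d b e) := hdK a b e
    _ ≤ K * max (K * d a b) (K * max (d b c : ℝ) (d c e)) := by
        gcongr
        · exact le_mul_of_one_le_left (by positivity) hK
        · exact hdK b c e
    _ = K ^ 2 * max (d a b : ℝ) (max (d b c : ℝ) (d c e)) := by
        rw [← mul_max_of_nonneg _ _ hK0, ← mul_assoc, sq]

variable [DecidableEq X] (d : X → X → ℝ≥0)

def zeroDiag : X → X → ℝ≥0 := fun a b => if a = b then 0 else d a b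

theorem zeroDiag_self (a : X) : zeroDiag d a a = 0 := if_pos rfl

theorem zeroDiag_of_ne {a b : X} (hab : a ≠ b) : zeroDiag d a b = d a b := if_neg hab

theorem zeroDiag_le : zeroDiag d ≤ d := fun a b => by
  unfold zeroDiag; split_ifs <;> simp

theorem zeroDiag_comm (hd : ∀ a b, d a b = d b a) (a b : X) : zeroDiag d a b = zeroDiag d b a := by
  simp only [zeroDiag, eq_comm (a := a), hd a b]

/-- Removing the steps between equal points turns a `zeroDiag d`-chain into a `d`-chain that is no
longer. -/
theorem exists_chainSum_le_chainSum_zeroDiag (l : List X) {a b : X} (hab : a ≠ b) :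
    ∃ l', chainSum d a l' b ≤ chainSum (zeroDiag d) a l b := by
  induction l generalizing a with
  | nil => exact ⟨[], by simp [zeroDiag_of_ne d hab]⟩
  | cons c l ih =>
    by_cases hcb : c = b
    · subst hcb
      exact ⟨[], by simp [zeroDiag_of_ne d hab]⟩
    obtain ⟨l', hl'⟩ := ih hcb
    by_cases hac : a = c
    · subst hac
      exact ⟨l', by simpa [zeroDiag_self] using hl'⟩
    · exact ⟨c :: l', by simpa [zeroDiag_of_ne d hac] using hl'⟩

theorem iInf_chainSum_zeroDiag {a b : X} (hab : a ≠ b) :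
    ⨅ l, chainSum (zeroDiag d) a l b = ⨅ l, chainSum d a l b := by
  refine le_antisymm (ciInf_mono (OrderBot.bddBelow _) (chainSum_mono (zeroDiag_le d) a · b)) ?_
  refine le_ciInf fun l => ?_
  obtain ⟨l', hl'⟩ := exists_chainSum_le_chainSum_zeroDiag d l hab
  exact (ciInf_le (OrderBot.bddBelow _) l').trans hl'

variable {d}

theorem zeroDiag_le_mul_max {K : ℝ} (hK : 1 ≤ K)
    (hdK : ∀ a b c, (d a c : ℝ) ≤ K * max (d a b : ℝ) (d b c)) (a b c : X) :
    (zeroDiag d a c : ℝ) ≤ K * max (zeroDiag d a b : ℝ) (zeroDiag d b c) := by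
  by_cases hac : a = c
  · rw [hac, zeroDiag_self, NNReal.coe_zero]
    positivity
  by_cases hb : a = b ∨ b = c
  · have hmax : (zeroDiag d a c : ℝ) ≤ max (zeroDiag d a b : ℝ) (zeroDiag d b c) := by
      rcases hb with rfl | rfl
      · exact le_max_right _ _
      · exact le_max_left _ _
    exact hmax.trans (le_mul_of_one_le_left (by positivity) hK)
  obtain ⟨hab, hbc⟩ := not_or.mp hb
  simpa only [zeroDiag_of_ne d hac, zeroDiag_of_ne d hab, zeroDiag_of_ne d hbc] using hdK a b c

noncomputable abbrev chainPseudoMetricSpace (hd : ∀ a b, d a b = d b a) : PseudoMetricSpace X :=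
  PseudoMetricSpace.ofPreNNDist (zeroDiag d) (zeroDiag_self d) (zeroDiag_comm d hd)

theorem dist_chainPseudoMetricSpace (hd : ∀ a b, d a b = d b a) {a b : X} (hab : a ≠ b) :
    @dist X (chainPseudoMetricSpace hd).toDist a b = ⨅ l, ((chainSum d a l b : ℝ≥0) : ℝ) := by
  rw [chainPseudoMetricSpace, PseudoMetricSpace.dist_ofPreNNDist, ← NNReal.coe_iInf]
  exact congrArg _ (iInf_chainSum_zeroDiag d hab)

theorem le_two_mul_dist_chainPseudoMetricSpace (hd : ∀ a b, d a b = d b a) {K : ℝ} (hK : 1 ≤ K)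
    (hK2 : K ^ 2 ≤ 2) (hdK : ∀ a b c, (d a c : ℝ) ≤ K * max (d a b : ℝ) (d b c)) {a b : X}
    (hab : a ≠ b) : (d a b : ℝ) ≤ 2 * @dist X (chainPseudoMetricSpace hd).toDist a b := by
  rw [← zeroDiag_of_ne d hab]
  refine PseudoMetricSpace.le_two_mul_dist_ofPreNNDist _ _ _ (fun x₁ x₂ x₃ x₄ => ?_) a b
  rw [← NNReal.coe_le_coe]
  push_cast
  calc _ ≤ K ^ 2 * _ := le_sq_mul_max_of_le_mul_max hK (zeroDiag_le_mul_max hK hdK) x₁ x₂ x₃ x₄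
    _ ≤ 2 * _ := by gcongr

end Chains

section Visual

variable {H : Type*} [MetricSpace H]

theorem gromovProd_comm (a b z : H) : gromovProd a b z = gromovProd b a z := by
  simp only [gromovProd, dist_comm a b, add_comm]

theorem gromovProdExt_comm (C : GromovCompletion H) (z : H) (ξ η : C.Hb) :
    gromovProdExt C z ξ η = gromovProdExt C z η ξ := by
  have liminf_swap (s t : ℕ → H) :
      liminf (fun p : ℕ × ℕ => gromovProd (s p.1) (t p.2) z) (atTop ×ˢ atTop) =
        liminf (fun p : ℕ × ℕ => gromovProd (t p.1) (s p.2) z) (atTop ×ˢ atTop) := by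
    calc _ = liminf ((fun p : ℕ × ℕ => gromovProd (t p.1) (s p.2) z) ∘ Prod.swap)
          (atTop ×ˢ atTop) := by simp only [Function.comp_def, Prod.fst_swap, Prod.snd_swap,
            gromovProd_comm (s _)]
      _ = _ := by rw [Filter.liminf_comp, ← Filter.prod_comm]
  unfold gromovProdExt
  congr 1
  ext r
  constructor <;> rintro ⟨s, t, hs, ht, rfl⟩ <;> exact ⟨t, s, ht, hs, liminf_swap s t⟩

noncomputable def visualGauge (C : GromovCompletion H) (ε : ℝ) (x : H) (ξ η : C.Hb) : ℝ≥0 :=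
  (Real.exp (-(ε * gromovProdExt C x ξ η))).toNNReal

theorem coe_visualGauge (C : GromovCompletion H) (ε : ℝ) (x : H) (ξ η : C.Hb) :
    (visualGauge C ε x ξ η : ℝ) = Real.exp (-(ε * gromovProdExt C x ξ η)) :=
  Real.coe_toNNReal _ (Real.exp_pos _).le

theorem visualGauge_comm (C : GromovCompletion H) (ε : ℝ) (x : H) (ξ η : C.Hb) :
    visualGauge C ε x ξ η = visualGauge C ε x η ξ := by
  rw [visualGauge, gromovProdExt_comm, visualGauge]

open scoped Classical in
noncomputable abbrev visualPseudoMetricSpace (C : GromovCompletion H) (ε : ℝ) (x : H) :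
    PseudoMetricSpace C.Hb :=
  chainPseudoMetricSpace (visualGauge_comm C ε x)

theorem visualGauge_le_mul_max (C : GromovCompletion H) {δ ε : ℝ} (hε : 0 ≤ ε) (x : H)
    (hδext : ∀ ξ η w : C.Hb,
      min (gromovProdExt C x ξ w) (gromovProdExt C x w η) - δ ≤ gromovProdExt C x ξ η)
    (ξ w η : C.Hb) :
    (visualGauge C ε x ξ η : ℝ) ≤
      Real.exp (ε * δ) * max (visualGauge C ε x ξ w : ℝ) (visualGauge C ε x w η) := by
  simp only [coe_visualGauge]
  rw [← Real.exp_monotone.map_max, ← Real.exp_add, Real.exp_le_exp]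
  have h := mul_le_mul_of_nonneg_left (hδext ξ η w) hε
  rcases min_choice (gromovProdExt C x ξ w) (gromovProdExt C x w η) with hmin | hmin <;>
    rw [hmin] at h
  · linarith [le_max_left (-(ε * gromovProdExt C x ξ w)) (-(ε * gromovProdExt C x w η))]
  · linarith [le_max_right (-(ε * gromovProdExt C x ξ w)) (-(ε * gromovProdExt C x w η))]

theorem rhoVisual_eq_dist (C : GromovCompletion H) (ε : ℝ) (x : H) (ξ η : C.Hb) :
    rhoVisual C ε x ξ η = @dist C.Hb (visualPseudoMetricSpace C ε x).toDist ξ η := by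
  classical
  let := visualPseudoMetricSpace C ε x
  unfold rhoVisual
  split_ifs with h
  · rw [h, dist_self]
  · rw [visualPseudoMetricSpace, dist_chainPseudoMetricSpace _ h,
      setOf_fin_chain_sum_eq_range (fun ξ η => Real.exp (-(ε * gromovProdExt C x ξ η))), sInf_range]
    simp only [coe_chainSum, coe_visualGauge]

end Visual

theorem rhoVisual_is_metric_general {H : Type*} [MetricSpace H]
    (δ ε : ℝ) (hδ0 : 0 ≤ δ) (hε : 0 < ε) (hεδ : 5 * ε * δ ≤ 1)
    (C : GromovCompletion H)
    (hδext : ∀ (z : H) (ξ η w : C.Hb),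
      min (gromovProdExt C z ξ w) (gromovProdExt C z w η) - δ ≤ gromovProdExt C z ξ η)
    (x : H) :
    (∀ ξ η : C.Hb, 0 ≤ rhoVisual C ε x ξ η) ∧
    (∀ ξ η : C.Hb, rhoVisual C ε x ξ η = rhoVisual C ε x η ξ) ∧
    (∀ ξ η : C.Hb, rhoVisual C ε x ξ η = 0 ↔ ξ = η) ∧
    (∀ ξ η ζ : C.Hb,
      rhoVisual C ε x ξ ζ ≤ rhoVisual C ε x ξ η + rhoVisual C ε x η ζ) := by
  classical
  let := visualPseudoMetricSpace C ε x
  have hK : 1 ≤ Real.exp (ε * δ) := Real.one_le_exp (by positivity)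
  have hK2 : Real.exp (ε * δ) ^ 2 ≤ 2 :=
    calc Real.exp (ε * δ) ^ 2 = Real.exp (2 * (ε * δ)) := by rw [← Real.exp_nat_mul]; norm_num
      _ ≤ Real.exp (Real.log 2) := Real.exp_le_exp.2 (by linarith [Real.log_two_gt_d9])
      _ = 2 := Real.exp_log two_pos
  simp only [rhoVisual_eq_dist]
  refine ⟨fun _ _ => dist_nonneg, dist_comm, fun ξ η => ⟨fun h => ?_, fun h => h ▸ dist_self ξ⟩,
    fun _ _ _ => dist_triangle _ _ _⟩
  by_contra hne
  have hpos : 0 < (visualGauge C ε x ξ η : ℝ) := coe_visualGauge C ε x ξ η ▸ Real.exp_pos _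
  have hle : (visualGauge C ε x ξ η : ℝ) ≤ 2 * dist ξ η :=
    le_two_mul_dist_chainPseudoMetricSpace _ hK hK2
      (visualGauge_le_mul_max C hε.le x (hδext x)) hne
  linarith

/-- if `H` is δ-hyperbolic (with the four-point condition holding for all
points of the completion) and `5εδ ≤ 1`, then `ρ_ε` is a metric on the Gromov
completion `H̄`. -/
theorem rhoVisual_is_metric {H : Type*} [MetricSpace H]
    (δ ε : ℝ) (hδ0 : 0 ≤ δ) (hε : 0 < ε) (hεδ : 5 * ε * δ ≤ 1)
    (hδ : ∀ x y z w : H, min (gromovProd x w z) (gromovProd w y z) - δ ≤ gromovProd x y z)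
    (C : GromovCompletion H)
    (hδext : ∀ (z : H) (ξ η w : C.Hb),
      min (gromovProdExt C z ξ w) (gromovProdExt C z w η) - δ ≤ gromovProdExt C z ξ η)
    (x : H) :
    (∀ ξ η : C.Hb, 0 ≤ rhoVisual C ε x ξ η) ∧
    (∀ ξ η : C.Hb, rhoVisual C ε x ξ η = rhoVisual C ε x η ξ) ∧
    (∀ ξ η : C.Hb, rhoVisual C ε x ξ η = 0 ↔ ξ = η) ∧
    (∀ ξ η ζ : C.Hb,
      rhoVisual C ε x ξ ζ ≤ rhoVisual C ε x ξ η + rhoVisual C ε x η ζ) :=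
  rhoVisual_is_metric_general δ ε hδ0 hε hεδ C hδext x
end

section
/- Let π: B → X be a separable metric bundle over a standard probability space (X,μ) with all fibers compact metric spaces. An element ν of the convex space Prob(π) of Borel fields of probability measures is an extreme point if and only if ν_x is a Dirac measure for μ-almost every x. -/
open MeasureTheory Filter Topology

/-- A separable metric bundle over a Borel space `X`: a Borel surjection `π : B → X`
with a Borel fiberwise metric `d` and a countable family of Borel sections with dense
values in every fiber. -/
structure MetricBundle (X : Type*) [MeasurableSpace X] (B : Type*) [MeasurableSpace B] where
  π : B → X
  measπ : Measurable π
  surj : Function.Surjective π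
  d : B → B → ℝ
  measd : Measurable fun p : B × B => d p.1 p.2
  d_self : ∀ b, d b b = 0
  d_comm : ∀ a b, d a b = d b a
  d_nonneg : ∀ a b, 0 ≤ d a b
  d_triangle : ∀ a b c, π a = π b → π b = π c → d a c ≤ d a b + d b c
  d_eq : ∀ a b, π a = π b → d a b = 0 → a = b
  sec : ℕ → X → B
  sec_meas : ∀ n, Measurable (sec n)
  sec_sect : ∀ n x, π (sec n x) = x
  sec_dense : ∀ (b : B) (ε : ℝ), 0 < ε → ∃ n, d b (sec n (π b)) < ε

variable {X : Type*} [MeasurableSpace X] {B : Type*} [MeasurableSpace B]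

/-- The fiber of the bundle over `x`. -/
def MetricBundle.Fib (P : MetricBundle X B) (x : X) : Type _ := {b : B // P.π b = x}

noncomputable instance (P : MetricBundle X B) (x : X) : MetricSpace (P.Fib x) where
  dist a b := P.d a.1 b.1
  dist_self a := P.d_self a.1
  dist_comm a b := P.d_comm a.1 b.1
  dist_triangle a b c :=
    P.d_triangle a.1 b.1 c.1 (a.2.trans b.2.symm) (b.2.trans c.2.symm)
  eq_of_dist_eq_zero := fun {a b} h =>
    Subtype.ext (P.d_eq a.1 b.1 (a.2.trans b.2.symm) h)

instance (P : MetricBundle X B) (x : X) : MeasurableSpace (P.Fib x) :=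
  Subtype.instMeasurableSpace

/-- A test function for the bundle: a bounded Borel function which is continuous on
every fiber (an element of `C(π)`; since fibers are compact, `C_0(π) = C(π)`). -/
structure MetricBundle.TestFun (P : MetricBundle X B) where
  F : B → ℝ
  meas : Measurable F
  cont : ∀ x : X, Continuous fun b : P.Fib x => F b.1
  bdd : ∃ M : ℝ, ∀ b, |F b| ≤ M

/-- A Borel field of fiberwise probability measures. -/
structure MetricBundle.MeasField (P : MetricBundle X B) where
  ν : ∀ x : X, Measure (P.Fib x)
  prob : ∀ x, IsProbabilityMeasure (ν x)
  meas : ∀ G : P.TestFun, Measurable fun x => ∫ b, G.F b.1 ∂(ν x)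

/-- The pairing `⟨ν, F⟩ = ∫_X ∫ F_x dν_x dμ(x)` between fields of measures and test
functions; the weak topology on fields is induced by these pairings, i.e. by the map
`fieldFunctional` into `C(π)*` with the weak* (product) topology. -/
noncomputable def MetricBundle.pairing (P : MetricBundle X B) (μ : Measure X)
    (m : P.MeasField) (G : P.TestFun) : ℝ :=
  ∫ x, (∫ b, G.F b.1 ∂(m.ν x)) ∂μ

/-- The canonical map `Ψ` from fields of measures to functionals on test functions. -/
noncomputable def MetricBundle.fieldFunctional (P : MetricBundle X B) (μ : Measure X) :
    P.MeasField → (P.TestFun → ℝ) :=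
  fun m G => P.pairing μ m G

/-!
The functions `g n = min (d(·, sec n)) 1` separate the points of every fiber, so a probability
measure on a fiber under which every `g n` has variance zero is a Dirac mass. Tilting each `ν_x`
by the densities `1 ± (g n - ν_x[g n])` exhibits `Ψ ν` as the midpoint of two points of
`Ψ(Prob(π))` whose pairings with `g n` differ by `2 ∫ Var_{ν_x}[g n] dμ`; at an extreme point
these variances therefore vanish almost everywhere. Conversely, if almost every `ν_x` is a Dirac
mass and `Ψ ν = a Ψ ν¹ + b Ψ ν²`, then the test function `(G - ν_x[G])²` pairs to zero with `ν`,
hence with `ν¹`, which forces `ν¹_x[G] = ν_x[G]` for almost every `x`.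
-/

open ProbabilityTheory Set

namespace MeasureTheory.Measure

variable {α : Type*} [MeasurableSpace α] {ν : Measure α}

theorem eq_dirac_of_ae_eq [IsProbabilityMeasure ν] {b : α} (h : ∀ᵐ a ∂ν, a = b) :
    ν = dirac b := by
  ext s hs
  rw [dirac_apply' b hs]
  by_cases hb : b ∈ s
  · rw [indicator_of_mem hb, Pi.one_apply, ← prob_compl_eq_zero_iff hs,
      measure_eq_zero_iff_ae_notMem]
    filter_upwards [h] with a rfl
    exact not_not_intro hb
  · rw [indicator_of_notMem hb, measure_eq_zero_iff_ae_notMem]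
    filter_upwards [h] with a rfl
    exact hb

noncomputable def centeredTilt (ν : Measure α) (g : α → ℝ) (s : ℝ) : Measure α :=
  ν.withDensity fun a => ENNReal.ofReal (1 + s * (g a - ν[g]))

variable [IsProbabilityMeasure ν] {g : α → ℝ} {s : ℝ}

theorem one_add_mul_sub_integral_nonneg (hg01 : ∀ a, g a ∈ Icc 0 1) (hs : |s| ≤ 1) (a : α) :
    0 ≤ 1 + s * (g a - ν[g]) := by
  have hmean₀ : 0 ≤ ν[g] := integral_nonneg fun a => (hg01 a).1
  have hmean₁ : ν[g] ≤ 1 := (le_abs_self _).trans <| by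
    simpa using norm_integral_le_of_norm_le_const (μ := ν) (f := g) (C := 1)
      (ae_of_all _ fun a => abs_le.2 ⟨by linarith [(hg01 a).1], (hg01 a).2⟩)
  have hdev : |g a - ν[g]| ≤ 1 := abs_le.2 ⟨by linarith [(hg01 a).1], by linarith [(hg01 a).2]⟩
  have htilt : |s * (g a - ν[g])| ≤ 1 :=
    (abs_mul _ _).trans_le (mul_le_one₀ hs (abs_nonneg _) hdev)
  linarith [neg_abs_le (s * (g a - ν[g]))]

theorem integral_centeredTilt (hg : Measurable g) (hg01 : ∀ a, g a ∈ Icc 0 1) (hs : |s| ≤ 1)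
    {F : α → ℝ} (hF : MemLp F 2 ν) :
    ∫ a, F a ∂ν.centeredTilt g s = ∫ a, F a ∂ν + s * cov[F, g; ν] := by
  have hg2 : MemLp g 2 ν := .of_bound hg.aestronglyMeasurable 1 (ae_of_all _ fun a =>
    (abs_of_nonneg (hg01 a).1).trans_le (hg01 a).2)
  have hFi : Integrable F ν := hF.integrable one_le_two
  have hFg : Integrable (fun a => F a * g a) ν := hF.integrable_mul hg2
  rw [centeredTilt, integral_withDensity_eq_integral_toReal_smul
    (by fun_prop) (ae_of_all _ fun _ => ENNReal.ofReal_lt_top), covariance_eq_sub hF hg2]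
  simp_rw [ENNReal.toReal_ofReal (one_add_mul_sub_integral_nonneg hg01 hs _), smul_eq_mul]
  calc ∫ a, (1 + s * (g a - ν[g])) * F a ∂ν
      = ∫ a, F a + s * (F a * g a - ν[g] * F a) ∂ν := by
        congr with a; ring
    _ = _ := by
      have hcov : Integrable (fun a => s * (F a * g a - ν[g] * F a)) ν :=
        (hFg.sub (hFi.const_mul _)).const_mul s
      rw [integral_add hFi hcov, integral_const_mul,
        integral_sub hFg (hFi.const_mul _), integral_const_mul]
      simp only [Pi.mul_apply]
      ring

theorem isProbabilityMeasure_centeredTilt (hg : Measurable g) (hg01 : ∀ a, g a ∈ Icc 0 1)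
    (hs : |s| ≤ 1) : IsProbabilityMeasure (ν.centeredTilt g s) := by
  have h := integral_centeredTilt hg hg01 hs (memLp_const (μ := ν) (1 : ℝ))
  rw [covariance_const_left, integral_const, integral_const] at h
  simp only [smul_eq_mul, mul_one, probReal_univ, mul_zero, add_zero] at h
  exact ⟨(ENNReal.toReal_eq_one_iff _).1 h⟩

end MeasureTheory.Measure

theorem integral_eq_of_integral_sub_mul_self_eq_zero {α : Type*} [MeasurableSpace α]
    {ν : Measure α} [IsProbabilityMeasure ν] {f : α → ℝ} {c : ℝ}
    (hint : Integrable (fun a => (f a - c) * (f a - c)) ν)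
    (h : ∫ a, (f a - c) * (f a - c) ∂ν = 0) : ∫ a, f a ∂ν = c := by
  have hae : ∀ᵐ a ∂ν, f a = c := by
    filter_upwards [(integral_eq_zero_iff_of_nonneg (fun a => mul_self_nonneg _) hint).1 h]
      with a ha
    exact sub_eq_zero.1 (mul_self_eq_zero.1 ha)
  simp [integral_congr_ae hae]

section DenseSequence

variable {E : Type*} [MetricSpace E] {s : ℕ → E}

theorem eq_of_forall_min_dist_eq (hs : DenseRange s) {a b : E}
    (h : ∀ n, min (dist a (s n)) 1 = min (dist b (s n)) 1) : a = b := by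
  by_contra hne
  set r := min (dist a b) 1
  have hr : 0 < r := lt_min (dist_pos.2 hne) one_pos
  obtain ⟨n, hn⟩ := Metric.denseRange_iff.1 hs a (r / 2) (half_pos hr)
  have ha : min (dist a (s n)) 1 < r / 2 := (min_le_left _ _).trans_lt hn
  have hb : r / 2 < min (dist b (s n)) 1 :=
    lt_min (by linarith [dist_triangle_right a b (s n), min_le_left (dist a b) 1])
      (by linarith [min_le_right (dist a b) 1])
  linarith [h n]

theorem exists_eq_dirac_of_ae_min_dist_eq [MeasurableSpace E] {ν : Measure E}
    [IsProbabilityMeasure ν] (hs : DenseRange s) {c : ℕ → ℝ}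
    (h : ∀ n, ∀ᵐ a ∂ν, min (dist a (s n)) 1 = c n) : ∃ b, ν = Measure.dirac b := by
  have hall := ae_all_iff.2 h
  obtain ⟨b, hb⟩ := hall.exists
  exact ⟨b, Measure.eq_dirac_of_ae_eq <| hall.mono fun a ha =>
    eq_of_forall_min_dist_eq hs fun n => (ha n).trans (hb n).symm⟩

end DenseSequence

namespace MetricBundle

variable (P : MetricBundle X B)

instance (m : P.MeasField) (x : X) : IsProbabilityMeasure (m.ν x) := m.prob x

def fibSec (n : ℕ) (x : X) : P.Fib x := ⟨P.sec n x, P.sec_sect n x⟩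

theorem denseRange_fibSec (x : X) : DenseRange fun n => P.fibSec n x :=
  Metric.denseRange_iff.2 fun ⟨b, hb⟩ r hr => by
    subst hb
    exact P.sec_dense b r hr

noncomputable def secDist (n : ℕ) : P.TestFun where
  F b := min (P.d b (P.sec n (P.π b))) 1
  meas := (P.measd.comp (measurable_id.prodMk ((P.sec_meas n).comp P.measπ))).min
    measurable_const
  cont x := by
    have hfib : (fun y : P.Fib x => min (P.d y.1 (P.sec n (P.π y.1))) 1)
        = fun y => min (dist y (P.fibSec n x)) 1 := funext fun ⟨b, hb⟩ => by subst hb; rfl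
    rw [hfib]
    fun_prop
  bdd := ⟨1, fun b => abs_le.2
    ⟨(neg_nonpos.2 zero_le_one).trans (le_min (P.d_nonneg _ _) zero_le_one), min_le_right _ _⟩⟩

variable {P}

theorem secDist_apply_fib (n : ℕ) {x : X} (y : P.Fib x) :
    (P.secDist n).F y.1 = min (dist y (P.fibSec n x)) 1 := by
  obtain ⟨b, rfl⟩ := y
  rfl

theorem secDist_mem_Icc (n : ℕ) (b : B) : (P.secDist n).F b ∈ Icc 0 1 :=
  ⟨le_min (P.d_nonneg _ _) zero_le_one, min_le_right _ _⟩

namespace TestFun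

def mul (G H : P.TestFun) : P.TestFun where
  F b := G.F b * H.F b
  meas := G.meas.mul H.meas
  cont x := (G.cont x).mul (H.cont x)
  bdd := by
    obtain ⟨M, hM⟩ := G.bdd
    obtain ⟨N, hN⟩ := H.bdd
    exact ⟨M * N, fun b => (abs_mul _ _).trans_le <|
      mul_le_mul (hM b) (hN b) (abs_nonneg _) ((abs_nonneg _).trans (hM b))⟩

def sub (G H : P.TestFun) : P.TestFun where
  F b := G.F b - H.F b
  meas := G.meas.sub H.meas
  cont x := (G.cont x).sub (H.cont x)
  bdd := by
    obtain ⟨M, hM⟩ := G.bdd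
    obtain ⟨N, hN⟩ := H.bdd
    exact ⟨M + N, fun b => (abs_sub _ _).trans (add_le_add (hM b) (hN b))⟩

variable (P) in
def ofBase (c : X → ℝ) (hc : Measurable c) (hcb : ∃ M, ∀ x, |c x| ≤ M) : P.TestFun where
  F b := c (P.π b)
  meas := hc.comp P.measπ
  cont x := by
    convert continuous_const (y := c x) with b
    exact b.2
  bdd := hcb.imp fun _ hM b => hM (P.π b)

theorem measurable_fib (G : P.TestFun) (x : X) : Measurable fun y : P.Fib x => G.F y.1 :=
  G.meas.comp measurable_subtype_coe

theorem memLp (G : P.TestFun) {x : X} (ν : Measure (P.Fib x)) [IsFiniteMeasure ν]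
    (p : ENNReal) : MemLp (fun y : P.Fib x => G.F y.1) p ν := by
  obtain ⟨M, hM⟩ := G.bdd
  exact .of_bound (G.measurable_fib x).aestronglyMeasurable M (ae_of_all _ fun y => hM y.1)

end TestFun

theorem exists_eq_dirac_of_variance_secDist_eq_zero {x : X} (ν : Measure (P.Fib x))
    [IsProbabilityMeasure ν] (h : ∀ n, Var[fun y : P.Fib x => (P.secDist n).F y.1; ν] = 0) :
    ∃ y, ν = Measure.dirac y :=
  exists_eq_dirac_of_ae_min_dist_eq (P.denseRange_fibSec x) fun n => by
    simpa only [secDist_apply_fib] using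
      ae_eq_integral_of_variance_eq_zero ((P.secDist n).memLp ν 2) (h n)

namespace MeasField

theorem abs_integral_le (m : P.MeasField) {G : P.TestFun} {M : ℝ} (hM : ∀ b, |G.F b| ≤ M)
    (x : X) : |∫ y, G.F y.1 ∂(m.ν x)| ≤ M := by
  simpa using norm_integral_le_of_norm_le_const (μ := m.ν x)
    (f := fun y => G.F y.1) (ae_of_all _ fun y => hM y.1)

theorem integrable_integral (m : P.MeasField) (μ : Measure X) [IsFiniteMeasure μ]
    (G : P.TestFun) : Integrable (fun x => ∫ y, G.F y.1 ∂(m.ν x)) μ := by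
  obtain ⟨M, hM⟩ := G.bdd
  exact .of_bound (m.meas G).aestronglyMeasurable M (ae_of_all _ (m.abs_integral_le hM))

end MeasField

theorem pairing_nonneg (μ : Measure X) (m : P.MeasField) {F : P.TestFun}
    (hF : ∀ b, 0 ≤ F.F b) : 0 ≤ P.pairing μ m F :=
  integral_nonneg fun _ => integral_nonneg fun y => hF y.1

theorem pairing_eq_zero_of_smul_add_smul_eq (μ : Measure X) {m m₁ m₂ : P.MeasField} {a b : ℝ}
    (ha : 0 < a) (hb : 0 ≤ b)
    (hsum : a • P.fieldFunctional μ m₁ + b • P.fieldFunctional μ m₂ = P.fieldFunctional μ m)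
    {F : P.TestFun} (hF : ∀ b, 0 ≤ F.F b) (h : P.pairing μ m F = 0) : P.pairing μ m₁ F = 0 := by
  have hcomb := congrFun hsum F
  simp only [Pi.add_apply, Pi.smul_apply, smul_eq_mul, fieldFunctional, h] at hcomb
  have h₁ := P.pairing_nonneg μ m₁ hF
  have h₂ := P.pairing_nonneg μ m₂ hF
  exact (mul_eq_zero.1 (by linarith [mul_nonneg ha.le h₁, mul_nonneg hb h₂])).resolve_left ha.ne'

theorem ae_integral_eq_zero_of_pairing_eq_zero (μ : Measure X) [IsFiniteMeasure μ]
    (m : P.MeasField) {F : P.TestFun} (hF : ∀ b, 0 ≤ F.F b) (h : P.pairing μ m F = 0) :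
    ∀ᵐ x ∂μ, ∫ y, F.F y.1 ∂(m.ν x) = 0 :=
  (integral_eq_zero_iff_of_nonneg (fun _ => integral_nonneg fun (y : P.Fib _) => hF y.1)
    (m.integrable_integral μ F)).1 h

namespace MeasField

noncomputable def tilt (m : P.MeasField) (n : ℕ) (s : ℝ) (hs : |s| ≤ 1) : P.MeasField where
  ν x := (m.ν x).centeredTilt (fun y => (P.secDist n).F y.1) s
  prob x := Measure.isProbabilityMeasure_centeredTilt ((P.secDist n).measurable_fib x)
    (fun y => secDist_mem_Icc n y.1) hs
  meas G := by
    simp_rw [Measure.integral_centeredTilt ((P.secDist n).measurable_fib _)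
      (fun y => secDist_mem_Icc n y.1) hs (G.memLp _ 2),
      covariance_eq_sub (G.memLp _ 2) ((P.secDist n).memLp _ 2)]
    exact (m.meas G).add (((m.meas (G.mul (P.secDist n))).sub
      ((m.meas G).mul (m.meas (P.secDist n)))).const_mul s)

theorem integral_tilt (m : P.MeasField) (n : ℕ) {s : ℝ} (hs : |s| ≤ 1) (G : P.TestFun) (x : X) :
    ∫ y, G.F y.1 ∂((m.tilt n s hs).ν x) = ∫ y, G.F y.1 ∂(m.ν x)
      + s * cov[fun y => G.F y.1, fun y => (P.secDist n).F y.1; m.ν x] :=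
  Measure.integral_centeredTilt ((P.secDist n).measurable_fib _)
    (fun y => secDist_mem_Icc n y.1) hs (G.memLp _ 2)

end MeasField

theorem fieldFunctional_mem_openSegment_tilt (μ : Measure X) [IsFiniteMeasure μ]
    (m : P.MeasField) (n : ℕ) :
    P.fieldFunctional μ m ∈ openSegment ℝ (P.fieldFunctional μ (m.tilt n 1 (by norm_num)))
      (P.fieldFunctional μ (m.tilt n (-1) (by norm_num))) := by
  refine ⟨1 / 2, 1 / 2, by norm_num, by norm_num, by norm_num, funext fun G => ?_⟩
  simp only [Pi.add_apply, Pi.smul_apply, smul_eq_mul, fieldFunctional, pairing]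
  rw [← integral_const_mul, ← integral_const_mul, ← integral_add
    (((m.tilt n 1 _).integrable_integral μ G).const_mul _)
    (((m.tilt n (-1) _).integrable_integral μ G).const_mul _)]
  congr with x
  rw [MeasField.integral_tilt, MeasField.integral_tilt]
  ring

theorem ae_variance_secDist_eq_zero (μ : Measure X) [IsFiniteMeasure μ] {m : P.MeasField}
    (hm : P.fieldFunctional μ m ∈ Set.extremePoints ℝ (Set.range (P.fieldFunctional μ)))
    (n : ℕ) : ∀ᵐ x ∂μ, Var[fun y : P.Fib x => (P.secDist n).F y.1; m.ν x] = 0 := by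
  set m₁ := m.tilt n 1 (by norm_num)
  set m₂ := m.tilt n (-1) (by norm_num)
  have hsplit : ∀ x, ∫ y, (P.secDist n).F y.1 ∂(m₁.ν x) - ∫ y, (P.secDist n).F y.1 ∂(m₂.ν x)
      = 2 * Var[fun y : P.Fib x => (P.secDist n).F y.1; m.ν x] := fun x => by
    rw [MeasField.integral_tilt, MeasField.integral_tilt,
      covariance_self ((P.secDist n).measurable_fib x).aemeasurable]
    ring
  have hequal : P.fieldFunctional μ m₁ = P.fieldFunctional μ m₂ := by
    obtain ⟨h₁, h₂⟩ := (mem_extremePoints.1 hm).2 _ (Set.mem_range_self _) _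
      (Set.mem_range_self _) (P.fieldFunctional_mem_openSegment_tilt μ m n)
    exact h₁.trans h₂.symm
  have hint : Integrable (fun x => ∫ y, (P.secDist n).F y.1 ∂(m₁.ν x)
      - ∫ y, (P.secDist n).F y.1 ∂(m₂.ν x)) μ :=
    (m₁.integrable_integral μ _).sub (m₂.integrable_integral μ _)
  have hzero : ∫ x, (∫ y, (P.secDist n).F y.1 ∂(m₁.ν x)
      - ∫ y, (P.secDist n).F y.1 ∂(m₂.ν x)) ∂μ = 0 := by
    rw [integral_sub (m₁.integrable_integral μ _) (m₂.integrable_integral μ _)]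
    exact sub_eq_zero.2 (congrFun hequal (P.secDist n))
  have hnonneg : ∀ x, 0 ≤ ∫ y, (P.secDist n).F y.1 ∂(m₁.ν x)
      - ∫ y, (P.secDist n).F y.1 ∂(m₂.ν x) := fun x =>
    (hsplit x).symm ▸ mul_nonneg zero_le_two (variance_nonneg _ _)
  filter_upwards [(integral_eq_zero_iff_of_nonneg hnonneg hint).1 hzero] with x hx
  simpa [hsplit] using hx

theorem fieldFunctional_eq_of_ae_dirac (μ : Measure X) [IsFiniteMeasure μ]
    {m m₁ m₂ : P.MeasField} (hdir : ∀ᵐ x ∂μ, ∃ y : P.Fib x, m.ν x = Measure.dirac y)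
    {a b : ℝ} (ha : 0 < a) (hb : 0 ≤ b)
    (hsum : a • P.fieldFunctional μ m₁ + b • P.fieldFunctional μ m₂ = P.fieldFunctional μ m) :
    P.fieldFunctional μ m₁ = P.fieldFunctional μ m := by
  funext G
  obtain ⟨M, hM⟩ := G.bdd
  set c : X → ℝ := fun x => ∫ y, G.F y.1 ∂(m.ν x)
  set H := G.sub (TestFun.ofBase P c (m.meas G) ⟨M, m.abs_integral_le hM⟩)
  have hH : ∀ x, (fun y : P.Fib x => (H.mul H).F y.1)
      = fun y => (G.F y.1 - c x) * (G.F y.1 - c x) := fun x => funext fun ⟨b, hb⟩ => by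
    subst hb; rfl
  have hH_nonneg : ∀ b, 0 ≤ (H.mul H).F b := fun b => mul_self_nonneg _
  have hm : P.pairing μ m (H.mul H) = 0 := by
    refine integral_eq_zero_of_ae ?_
    filter_upwards [hdir] with x ⟨y, hy⟩
    rw [Pi.zero_apply, hy, integral_dirac' _ _ ((H.mul H).measurable_fib x).stronglyMeasurable,
      congrFun (hH x) y]
    simp [c, hy, integral_dirac' _ _ (G.measurable_fib x).stronglyMeasurable]
  have hm₁ := P.pairing_eq_zero_of_smul_add_smul_eq μ ha hb hsum hH_nonneg hm
  refine integral_congr_ae ?_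
  filter_upwards [P.ae_integral_eq_zero_of_pairing_eq_zero μ m₁ hH_nonneg hm₁] with x hx
  rw [hH x] at hx
  exact integral_eq_of_integral_sub_mul_self_eq_zero
    (hH x ▸ ((H.mul H).memLp _ 1).integrable le_rfl) hx

end MetricBundle

theorem probFields_extremePoint_iff_dirac_general
    {X : Type*} [MeasurableSpace X]
    {B : Type*} [MeasurableSpace B]
    (μ : Measure X) [IsProbabilityMeasure μ]
    (P : MetricBundle X B)
    (m : P.MeasField) :
    P.fieldFunctional μ m ∈
        Set.extremePoints ℝ (Set.range (P.fieldFunctional μ)) ↔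
      ∀ᵐ x ∂μ, ∃ b : P.Fib x, m.ν x = MeasureTheory.Measure.dirac b := by
  refine ⟨fun hm => ?_, fun hdir => ?_⟩
  · filter_upwards [ae_all_iff.2 (P.ae_variance_secDist_eq_zero μ hm)] with x hx
    exact P.exists_eq_dirac_of_variance_secDist_eq_zero (m.ν x) hx
  · refine mem_extremePoints.2 ⟨Set.mem_range_self m, ?_⟩
    rintro _ ⟨m₁, rfl⟩ _ ⟨m₂, rfl⟩ ⟨a, b, ha, hb, -, hsum⟩
    exact ⟨P.fieldFunctional_eq_of_ae_dirac μ hdir ha hb.le hsum,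
      P.fieldFunctional_eq_of_ae_dirac μ hdir hb ha.le ((add_comm _ _).trans hsum)⟩

/-- for a separable metric bundle with compact fibers over a standard
probability space, a field of probability measures is an extreme point of `Prob(π)`
(viewed inside `C(π)*` via `Ψ`) if and only if almost every fiber measure is a Dirac
measure. -/
theorem probFields_extremePoint_iff_dirac
    {X : Type*} [MeasurableSpace X] [StandardBorelSpace X]
    {B : Type*} [MeasurableSpace B]
    (μ : Measure X) [IsProbabilityMeasure μ]
    (P : MetricBundle X B) (hcomp : ∀ x : X, CompactSpace (P.Fib x))
    (m : P.MeasField) :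
    P.fieldFunctional μ m ∈
        Set.extremePoints ℝ (Set.range (P.fieldFunctional μ)) ↔
      ∀ᵐ x ∂μ, ∃ b : P.Fib x, m.ν x = MeasureTheory.Measure.dirac b :=
  probFields_extremePoint_iff_dirac_general μ P m
end
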